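/- arXiv:2004.02479 — 2 statements merged into one kernel-verified Lean document; each statement's English description precedes it below -/
import Mathlib

section
/- Let A be an additive category, and suppose given a commutative diagram with rows A →x B →y C and A →⟨1,0⟩ A ⊕ C →⟨0,1⟩_proj C, with vertical maps id_A, f : B → A ⊕ C, id_C, where f composed with the projection to C equals y. Assume the top row is a weak cokernel sequence (any g : B → T with g ∘ x = 0 factors through y) and that f is an epimorphism. Then f is an isomorphism. -/
open CategoryTheory Limits

/-- given a weak cokernel sequence `A ⟶ B ⟶ C`, a comparison map
`f = biprod.lift r y : B ⟶ A ⊞ C` with `x ≫ r = 𝟙 A` which is an epimorphism is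
an isomorphism. -/
theorem stmt2 {𝒜 : Type*} [Category 𝒜] [Preadditive 𝒜] [HasBinaryBiproducts 𝒜]
    {A B C : 𝒜} (x : A ⟶ B) (y : B ⟶ C) (r : B ⟶ A) (f : B ⟶ A ⊞ C)
    (hf : f = biprod.lift r y)
    (hfx : x ≫ r = 𝟙 A)
    (hxy : x ≫ y = 0)
    (hwc : ∀ {T : 𝒜} (g : B ⟶ T), x ≫ g = 0 → ∃ k : C ⟶ T, y ≫ k = g)
    (hepi : Epi f) :
    IsIso f := by
  obtain ⟨k, hk⟩ := hwc (𝟙 B - r ≫ x) (by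
    simp [Preadditive.comp_sub, ← Category.assoc, hfx])
  have hsec : f ≫ biprod.desc x k = 𝟙 B := by
    subst hf
    simp only [biprod.lift_desc]
    rw [hk]
    abel
  refine ⟨biprod.desc x k, hsec, ?_⟩
  rw [← cancel_epi f, ← Category.assoc, hsec, Category.id_comp, Category.comp_id]
end

section
/- Let H be an additive category and E : Hᵒᵖ × H → Type a bifunctor together with, for each pair (C,A), a binary operation + on E(C,A) defined by δ₁ + δ₂ = (∇_A)_* (Δ_C)^* (δ₁ ⊕ δ₂), where ⊕ : E(C,A) × E(C,A) → E(C ⊕ C, A ⊕ A) is an external product natural in both variables and compatible with composition (i.e., (a₁ ⊕ a₂)_*(δ₁ ⊕ δ₂) = a₁_*δ₁ ⊕ a₂_*δ₂ and dually). Then for any δ ∈ E(C,A) and a, a' ∈ End(A): (a + a')_* δ = a_* δ + a'_* δ. -/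
open CategoryTheory Limits

/-- Proposition 4.16 (1): for a bifunctor-like assignment `E` with pushforward
`push`, pullback `pull` and external sum `oplus` compatible with composition, defining
`δ₁ + δ₂ := (∇_A)_* (Δ_C)^* (δ₁ ⊕ δ₂)` one has `(a + a')_* δ = a_* δ + a'_* δ` for all
endomorphisms `a, a'` of `A`. -/
theorem stmt8 {H : Type*} [Category H] [Preadditive H] [HasBinaryBiproducts H]
    (E : H → H → Type*)
    (push : ∀ {A A' : H}, (A ⟶ A') → ∀ {C : H}, E C A → E C A')
    (pull : ∀ {C' C : H}, (C' ⟶ C) → ∀ {A : H}, E C A → E C' A)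
    (oplus : ∀ {C₁ A₁ C₂ A₂ : H}, E C₁ A₁ → E C₂ A₂ → E (C₁ ⊞ C₂) (A₁ ⊞ A₂))
    -- functoriality of pushforward
    (hpush_comp : ∀ {A A' A'' C : H} (a : A ⟶ A') (a' : A' ⟶ A'') (δ : E C A),
      push (a ≫ a') δ = push a' (push a δ))
    -- pushforwards and pullbacks commute
    (hcomm : ∀ {A A' C' C : H} (a : A ⟶ A') (c : C' ⟶ C) (δ : E C A),
      push a (pull c δ) = pull c (push a δ))
    -- `⊕` is compatible with pushforward: `(a₁ ⊕ a₂)_* (δ₁ ⊕ δ₂) = a₁_* δ₁ ⊕ a₂_* δ₂`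
    (hoplus_push : ∀ {C₁ A₁ A₁' C₂ A₂ A₂' : H} (a₁ : A₁ ⟶ A₁') (a₂ : A₂ ⟶ A₂')
      (δ₁ : E C₁ A₁) (δ₂ : E C₂ A₂),
      push (biprod.map a₁ a₂) (oplus δ₁ δ₂) = oplus (push a₁ δ₁) (push a₂ δ₂))
    -- Lemma 4.14 (1): `(Δ_A)_* δ = (Δ_C)^* (δ ⊕ δ)`
    (hdiag : ∀ {C A : H} (δ : E C A),
      push (biprod.lift (𝟙 A) (𝟙 A)) δ = pull (biprod.lift (𝟙 C) (𝟙 C)) (oplus δ δ))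
    {C A : H} (δ : E C A) (a a' : A ⟶ A) :
    push (a + a') δ =
      push (biprod.desc (𝟙 A) (𝟙 A))
        (pull (biprod.lift (𝟙 C) (𝟙 C)) (oplus (push a δ) (push a' δ))) := by
  have hfac : a + a' =
      biprod.lift (𝟙 A) (𝟙 A) ≫ biprod.map a a' ≫ biprod.desc (𝟙 A) (𝟙 A) := by
    have h1 : biprod.lift (𝟙 A) (𝟙 A) ≫ biprod.map a a' = biprod.lift a a' := by
      ext <;> simp
    rw [← Category.assoc, h1, biprod.lift_desc, Category.comp_id, Category.comp_id]
  rw [hfac, hpush_comp, hpush_comp, hdiag, hcomm, hoplus_push]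
end
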